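/- (DFA condition) For any DFA 𝒜 = (Q, A, δ, q⁰, F) with finitely many states over a nonempty finite alphabet A, the sequence μ_n(L(𝒜)) fails to converge to 0 if and only if there exists a state q ∈ F such that Reachable(q⁰, q) holds and for every state q' ∈ Q, Reachable(q, q') implies Reachable(q', q). -/

import Mathlib

open Filter

/-- `mu L n` is the probability that a uniformly random string of length `n` lies in `L`. -/
noncomputable def mu {A : Type*} [Fintype A] (L : Set (List A)) (n : ℕ) : ℝ :=
  (Nat.card {s : List A // s.length = n ∧ s ∈ L} : ℝ) / (Fintype.card A : ℝ) ^ n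

/-- Symmetric difference of two languages. -/
def sdiffL {A : Type*} (L₁ L₂ : Set (List A)) : Set (List A) := (L₁ \ L₂) ∪ (L₂ \ L₁)

/-- `L₁ ≃_p L₂` : the probability of the symmetric difference tends to `0`. -/
def pEquiv {A : Type*} [Fintype A] (L₁ L₂ : Set (List A)) : Prop :=
  Filter.Tendsto (mu (sdiffL L₁ L₂)) Filter.atTop (nhds 0)

/-- `Reachable M q q'` : there is a string driving `M` from state `q` to state `q'`. -/
def Reachable {A σ : Type*} (M : DFA A σ) (q q' : σ) : Prop :=
  ∃ s : List A, M.evalFrom q s = q'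

/-- The language accepted by the DFA `M`. -/
def langOf {A σ : Type*} (M : DFA A σ) : Set (List A) := {s : List A | M.eval s ∈ M.accept}

open Filter Topology BigOperators

/-! Write `p n q` (`evalFromProb M S n q`) for the probability that a random word of length `n`
leads from `q` into a set of states `S`; then `p (n + 1) q` is the average of `p n` over the
successors of `q`. Call `q` recurrent if it can be reached back from every state it reaches.

From every state some word of one fixed length `K` enters a recurrent state, and from there no
transient state is ever reached again. Hence the probability of ending in a transient state
shrinks by the factor `1 - |A| ^ (-K)` every `K` steps, so it tends to `0`, and so does `μ_n`
when every reachable accepting state is transient.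

Conversely, if `q` is accepting and recurrent, a word of length at most `B` leads back to `q`
from every state reachable from `q`. So `∑_{ℓ ≤ B} p (n + ℓ) ≥ |A| ^ (-B)` holds for `n = 0` on
that closed class, and averaging preserves it for all `n`; thus `p n q`, and with it `μ_n`, does
not tend to `0`. -/

section Mu

variable {A : Type*} [Fintype A]

instance finite_length_eq_and (P : List A → Prop) (n : ℕ) :
    Finite {s : List A // s.length = n ∧ P s} :=
  Finite.of_injective (β := List.Vector A n) _
    (Subtype.impEmbedding _ _ fun _ h => h.1).injective

lemma mu_nonneg (L : Set (List A)) (n : ℕ) : 0 ≤ mu L n := by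
  unfold mu; positivity

lemma mu_le_one [Nonempty A] (L : Set (List A)) (n : ℕ) : mu L n ≤ 1 := by
  have hcard : Nat.card {s : List A // s.length = n ∧ s ∈ L} ≤ Fintype.card A ^ n := by
    rw [← card_vector, ← Nat.card_eq_fintype_card]
    exact Nat.card_le_card_of_injective (β := List.Vector A n) _
      (Subtype.impEmbedding _ _ fun _ h => h.1).injective
  rw [mu, div_le_one (by positivity)]
  exact_mod_cast hcard

lemma mu_mono {L L' : Set (List A)} (h : L ⊆ L') (n : ℕ) : mu L n ≤ mu L' n := by
  have hcard : Nat.card {s : List A // s.length = n ∧ s ∈ L} ≤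
      Nat.card {s : List A // s.length = n ∧ s ∈ L'} :=
    Nat.card_le_card_of_injective _
      (Subtype.impEmbedding _ _ fun _ hs => ⟨hs.1, h hs.2⟩).injective
  unfold mu
  gcongr

lemma mu_empty (n : ℕ) : mu (∅ : Set (List A)) n = 0 := by
  simp [mu]

lemma inv_pow_le_mu_of_mem {L : Set (List A)} {s : List A} (hs : s ∈ L) :
    1 / (Fintype.card A : ℝ) ^ s.length ≤ mu L s.length := by
  have : Nonempty {t : List A // t.length = s.length ∧ t ∈ L} := ⟨⟨s, rfl, hs⟩⟩
  unfold mu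
  gcongr
  exact_mod_cast Nat.one_le_iff_ne_zero.2 Nat.card_pos.ne'

def consEquiv (L : Set (List A)) (n : ℕ) :
    {s : List A // s.length = n + 1 ∧ s ∈ L} ≃
      Σ a : A, {s : List A // s.length = n ∧ a :: s ∈ L} where
  toFun
    | ⟨[], h⟩ => absurd h.1 (by simp)
    | ⟨a :: s, h⟩ => ⟨a, s, by simpa using h.1, h.2⟩
  invFun | ⟨a, s, h⟩ => ⟨a :: s, by simpa using h.1, h.2⟩
  left_inv
    | ⟨[], h⟩ => absurd h.1 (by simp)
    | ⟨a :: s, h⟩ => rfl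
  right_inv | ⟨a, s, h⟩ => rfl

lemma mu_succ [Nonempty A] (L : Set (List A)) (n : ℕ) :
    mu L (n + 1) = 𝔼 a, mu {s | a :: s ∈ L} n := by
  rw [Fintype.expect_eq_sum_div_card, mu, Nat.card_congr (consEquiv L n), Nat.card_sigma,
    Nat.cast_sum, Finset.sum_div, Finset.sum_div, pow_succ]
  simp only [mu, div_div, Set.mem_ofPred_eq]

end Mu

lemma exists_length_le_of_forall_exists {A ι : Type*} [Finite ι] {P : ι → List A → Prop}
    (h : ∀ i, ∃ u, P i u) : ∃ B, ∀ i, ∃ u, u.length ≤ B ∧ P i u := by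
  choose u hu using h
  obtain ⟨B, hB⟩ := Finite.bddAbove_range fun i => (u i).length
  exact ⟨B, fun i => ⟨u i, hB (Set.mem_range_self i), hu i⟩⟩

section Reachability

variable {A σ : Type*} (M : DFA A σ)

lemma Reachable.refl (q : σ) : Reachable M q q := ⟨[], rfl⟩

lemma reachable_evalFrom (q : σ) (s : List A) : Reachable M q (M.evalFrom q s) := ⟨s, rfl⟩

def IsRecurrent (q : σ) : Prop := ∀ q', Reachable M q q' → Reachable M q' q

variable {M}

lemma Reachable.trans {q q' q'' : σ} (h : Reachable M q q') (h' : Reachable M q' q'') :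
    Reachable M q q'' := by
  obtain ⟨s, rfl⟩ := h
  obtain ⟨t, rfl⟩ := h'
  exact ⟨s ++ t, M.evalFrom_of_append _ _ _⟩

lemma Reachable.step {q q' : σ} (h : Reachable M q q') (a : A) : Reachable M q (M.step q' a) :=
  h.trans (reachable_evalFrom M q' [a])

lemma IsRecurrent.evalFrom {q : σ} (hq : IsRecurrent M q) (s : List A) :
    IsRecurrent M (M.evalFrom q s) := fun q' h =>
  (hq q' ((reachable_evalFrom M q s).trans h)).trans (reachable_evalFrom M q s)

variable (M)

lemma exists_isRecurrent_evalFrom [Finite σ] (q : σ) : ∃ s, IsRecurrent M (M.evalFrom q s) := by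
  let escapes : σ → σ → Prop := fun x y => Reachable M y x ∧ ¬ Reachable M x y
  have : IsTrans σ escapes :=
    ⟨fun _ _ _ hab hbc => ⟨hbc.1.trans hab.1, fun hac => hab.2 (hac.trans hbc.1)⟩⟩
  have : Std.Irrefl escapes := ⟨fun _ h => h.2 h.1⟩
  obtain ⟨b, ⟨s, rfl⟩, hmin⟩ :=
    (Finite.wellFounded_of_trans_of_irrefl escapes).has_min {x | Reachable M q x}
      ⟨q, Reachable.refl M q⟩
  refine ⟨s, fun x hx => ?_⟩
  by_contra hxb
  exact hmin x ((reachable_evalFrom M q s).trans hx) ⟨hx, hxb⟩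

lemma exists_pos_forall_exists_length_eq_isRecurrent [Nonempty A] [Finite σ] :
    ∃ K > 0, ∀ q : σ, ∃ s : List A, s.length = K ∧ IsRecurrent M (M.evalFrom q s) := by
  obtain ⟨B, hB⟩ := exists_length_le_of_forall_exists (exists_isRecurrent_evalFrom M)
  refine ⟨B + 1, B.succ_pos, fun q => ?_⟩
  obtain ⟨u, hu, hrec⟩ := hB q
  refine ⟨u ++ List.replicate (B + 1 - u.length) (Classical.arbitrary A), ?_, ?_⟩
  · simp only [List.length_append, List.length_replicate]
    omega
  · rw [M.evalFrom_of_append]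
    exact hrec.evalFrom _

end Reachability

section StepAverage

variable {A σ : Type*} [Fintype A] (M : DFA A σ)

def IsStepAverage (f : ℕ → σ → ℝ) : Prop :=
  ∀ n q, f (n + 1) q = 𝔼 a, f n (M.step q a)

noncomputable def evalFromProb (S : Set σ) (n : ℕ) (q : σ) : ℝ :=
  mu {s | M.evalFrom q s ∈ S} n

lemma isStepAverage_evalFromProb [Nonempty A] (S : Set σ) :
    IsStepAverage M (evalFromProb M S) :=
  fun n _ => mu_succ _ n

variable {M} {f : ℕ → σ → ℝ}

lemma evalFromProb_eq_zero_of_isRecurrent {q : σ} (hq : IsRecurrent M q) (n : ℕ) :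
    evalFromProb M {x | ¬ IsRecurrent M x} n q = 0 := by
  have : {s | M.evalFrom q s ∈ {x | ¬ IsRecurrent M x}} = ∅ :=
    Set.eq_empty_of_forall_notMem fun s hs => hs (hq.evalFrom s)
  rw [evalFromProb, this, mu_empty]

lemma IsStepAverage.neg (hf : IsStepAverage M f) : IsStepAverage M (-f) := fun n q => by
  simp only [Pi.neg_apply, hf n q, Finset.expect_neg_distrib]

lemma IsStepAverage.sum_shift (hf : IsStepAverage M f) (B : ℕ) :
    IsStepAverage M (fun n q => ∑ ℓ ∈ Finset.range B, f (n + ℓ) q) := fun n q => by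
  simp only [Nat.add_right_comm n 1, hf _ q]
  exact (Finset.expect_sum_comm _ _ _).symm

lemma IsStepAverage.le_of_forall_le [Nonempty A] (hf : IsStepAverage M f) {C : Set σ}
    (hC : ∀ x ∈ C, ∀ a, M.step x a ∈ C) {m : ℕ} {c : ℝ} (h : ∀ x ∈ C, f m x ≤ c) :
    ∀ k, ∀ x ∈ C, f (k + m) x ≤ c
  | 0, x, hx => by simpa using h x hx
  | k + 1, x, hx => by
    rw [Nat.add_right_comm, hf]
    exact Finset.expect_le Finset.univ_nonempty fun a _ => hf.le_of_forall_le hC h k _ (hC x hx a)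

lemma expect_le_sub_div_card [Nonempty A] {g : A → ℝ} {c : ℝ} (h : ∀ b, g b ≤ c) (a : A) :
    𝔼 b, g b ≤ c - (c - g a) / Fintype.card A := by
  have hsingle : c - g a ≤ ∑ b, (c - g b) :=
    Finset.single_le_sum (fun b _ => sub_nonneg.2 (h b)) (Finset.mem_univ a)
  have hA : (0 : ℝ) < Fintype.card A := by exact_mod_cast Fintype.card_pos
  rw [Fintype.expect_eq_sum_div_card, Finset.sum_sub_distrib, Finset.sum_const,
    Finset.card_univ, nsmul_eq_mul] at *
  rw [le_sub_iff_add_le, ← add_div, div_le_iff₀ hA]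
  linarith

lemma IsStepAverage.ge_of_forall_ge [Nonempty A] (hf : IsStepAverage M f) {C : Set σ}
    (hC : ∀ x ∈ C, ∀ a, M.step x a ∈ C) {m : ℕ} {c : ℝ} (h : ∀ x ∈ C, c ≤ f m x)
    (k : ℕ) : ∀ x ∈ C, c ≤ f (k + m) x := fun x hx =>
  neg_le_neg_iff.1 (hf.neg.le_of_forall_le hC (fun y hy => neg_le_neg (h y hy)) k x hx)

lemma IsStepAverage.le_sub_div_evalFrom [Nonempty A] (hf : IsStepAverage M f) {m : ℕ} {c : ℝ}
    (h : ∀ x, f m x ≤ c) (q : σ) (w : List A) :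
    f (w.length + m) q ≤ c - (c - f m (M.evalFrom q w)) / Fintype.card A ^ w.length := by
  induction w generalizing q with
  | nil => simp
  | cons a w ih =>
    have hle : ∀ x, f (w.length + m) x ≤ c := fun x =>
      hf.le_of_forall_le (C := Set.univ) (fun _ _ _ => trivial) (fun x _ => h x) _ x trivial
    rw [List.length_cons, Nat.add_right_comm, hf]
    calc 𝔼 b, f (w.length + m) (M.step q b)
        ≤ c - (c - f (w.length + m) (M.step q a)) / Fintype.card A :=
          expect_le_sub_div_card (fun b => hle _) a
      _ ≤ c - (c - f m (M.evalFrom (M.step q a) w)) / Fintype.card A ^ w.length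
            / Fintype.card A := by
          gcongr
          linarith [ih (M.step q a)]
      _ = c - (c - f m (M.evalFrom q (a :: w))) / Fintype.card A ^ (w.length + 1) := by
          rw [pow_succ, div_div]
          rfl

lemma IsStepAverage.div_le_evalFrom [Nonempty A] (hf : IsStepAverage M f) {m : ℕ}
    (h : ∀ x, 0 ≤ f m x) (q : σ) (w : List A) :
    f m (M.evalFrom q w) / Fintype.card A ^ w.length ≤ f (w.length + m) q := by
  have := hf.neg.le_sub_div_evalFrom (c := 0) (fun x => neg_nonpos.2 (h x)) q w
  simp only [Pi.neg_apply, zero_sub, neg_neg] at this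
  linarith [neg_div (Fintype.card A ^ w.length : ℝ) (f m (M.evalFrom q w))]

lemma IsStepAverage.le_one_sub_mul [Nonempty A] (hf : IsStepAverage M f) {K m : ℕ} {c : ℝ}
    (h : ∀ x, f m x ≤ c)
    (hword : ∀ x, ∃ w : List A, w.length = K ∧ f m (M.evalFrom x w) = 0) (q : σ) :
    f (K + m) q ≤ (1 - 1 / Fintype.card A ^ K) * c := by
  obtain ⟨w, rfl, hw⟩ := hword q
  have := hf.le_sub_div_evalFrom h q w
  rw [hw] at this
  linarith [show (1 - 1 / (Fintype.card A : ℝ) ^ w.length) * c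
    = c - (c - 0) / Fintype.card A ^ w.length by ring]

end StepAverage

section Limits

variable {A σ : Type*} [Fintype A] [Nonempty A] (M : DFA A σ)

theorem tendsto_evalFromProb_not_isRecurrent [Finite σ] (q : σ) :
    Tendsto (fun n => evalFromProb M {x | ¬ IsRecurrent M x} n q) atTop (𝓝 0) := by
  set f := evalFromProb M {x | ¬ IsRecurrent M x}
  have hf := isStepAverage_evalFromProb M {x | ¬ IsRecurrent M x}
  obtain ⟨K, hK, hword⟩ := exists_pos_forall_exists_length_eq_isRecurrent M
  set θ : ℝ := 1 - 1 / Fintype.card A ^ K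
  have hA : (1 : ℝ) ≤ Fintype.card A := by exact_mod_cast Fintype.card_pos
  have hθ0 : 0 ≤ θ := sub_nonneg.2 (div_le_one_of_le₀ (one_le_pow₀ hA) (by positivity))
  have hθ1 : θ < 1 := sub_lt_self _ (by positivity)
  have hperiod : ∀ j x, f (j * K) x ≤ θ ^ j := by
    intro j
    induction j with
    | zero => intro x; rw [zero_mul, pow_zero]; exact mu_le_one _ 0
    | succ j ih =>
      intro x
      have hvanish : ∀ y, ∃ w : List A, w.length = K ∧ f (j * K) (M.evalFrom y w) = 0 := by
        intro y
        obtain ⟨w, hw, hrec⟩ := hword y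
        exact ⟨w, hw, evalFromProb_eq_zero_of_isRecurrent hrec _⟩
      calc f ((j + 1) * K) x = f (K + j * K) x := by rw [add_one_mul, add_comm]
        _ ≤ θ * θ ^ j := hf.le_one_sub_mul ih hvanish x
        _ = θ ^ (j + 1) := (pow_succ' θ j).symm
  have hbound : ∀ n, f n q ≤ θ ^ (n / K) := fun n => by
    have := hf.le_of_forall_le (C := Set.univ) (fun _ _ _ => trivial)
      (fun x _ => hperiod (n / K) x) (n % K) q trivial
    rwa [Nat.mod_add_div'] at this
  exact squeeze_zero (fun n => mu_nonneg _ _) hbound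
    ((tendsto_pow_atTop_nhds_zero_of_lt_one hθ0 hθ1).comp (Nat.tendsto_div_const_atTop hK.ne'))

variable {M}

lemma tendsto_evalFromProb_evalFrom {S : Set σ} {q : σ}
    (h : Tendsto (fun n => evalFromProb M S n q) atTop (𝓝 0)) (w : List A) :
    Tendsto (fun n => evalFromProb M S n (M.evalFrom q w)) atTop (𝓝 0) := by
  have hA : (0 : ℝ) < Fintype.card A ^ w.length := by positivity
  have hshift := ((tendsto_add_atTop_iff_nat w.length).2 h).const_mul
    ((Fintype.card A : ℝ) ^ w.length)
  rw [mul_zero] at hshift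
  refine squeeze_zero (fun n => mu_nonneg _ _) (fun n => ?_) hshift
  rw [← div_le_iff₀' hA, add_comm]
  exact (isStepAverage_evalFromProb M S).div_le_evalFrom (fun _ => mu_nonneg _ _) q w

theorem IsRecurrent.not_tendsto_evalFromProb [Finite σ] {S : Set σ} {q : σ}
    (hq : IsRecurrent M q) (hqS : q ∈ S) :
    ¬ Tendsto (fun n => evalFromProb M S n q) atTop (𝓝 0) := by
  intro htend
  have hf := isStepAverage_evalFromProb M S
  obtain ⟨B, hB⟩ := exists_length_le_of_forall_exists fun x : {x // Reachable M q x} => hq x x.2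
  set c : ℝ := 1 / Fintype.card A ^ B
  set g := fun n x => ∑ ℓ ∈ Finset.range (B + 1), evalFromProb M S (n + ℓ) x
  have hreturn : ∀ x ∈ {x | Reachable M q x}, c ≤ g 0 x := by
    intro x hx
    obtain ⟨u, hu, hux⟩ := hB ⟨x, hx⟩
    have hmem : u ∈ {s | M.evalFrom x s ∈ S} := by simpa [hux] using hqS
    have hA : (1 : ℝ) ≤ Fintype.card A := by exact_mod_cast Fintype.card_pos
    calc c ≤ 1 / Fintype.card A ^ u.length :=
          one_div_le_one_div_of_le (by positivity) (pow_le_pow_right₀ hA hu)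
      _ ≤ evalFromProb M S u.length x := inv_pow_le_mu_of_mem hmem
      _ ≤ g 0 x := by
          simp only [g, zero_add]
          exact Finset.single_le_sum (f := fun ℓ => evalFromProb M S ℓ x)
            (fun _ _ => mu_nonneg _ _) (Finset.mem_range.2 (Nat.lt_succ_of_le hu))
  have hlower : ∀ n, c ≤ g n q := fun n =>
    (hf.sum_shift (B + 1)).ge_of_forall_ge (C := {x | Reachable M q x})
      (fun _ (hx : Reachable M q _) a => hx.step a) hreturn n q
      (Reachable.refl M q)
  have hsum : Tendsto (fun n => g n q) atTop (𝓝 0) := by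
    simpa using tendsto_finsetSum _ fun ℓ _ => (tendsto_add_atTop_iff_nat ℓ).2 htend
  exact absurd (ge_of_tendsto' hsum hlower) (not_le.2 (by positivity))

end Limits

theorem dfa_condition {A σ : Type*} [Fintype A] [Nonempty A] [Fintype σ] (M : DFA A σ) :
    ¬ Filter.Tendsto (mu (langOf M)) Filter.atTop (nhds 0) ↔
      ∃ q ∈ M.accept, Reachable M M.start q ∧
        ∀ q' : σ, Reachable M q q' → Reachable M q' q := by
  change ¬ Tendsto (fun n => evalFromProb M M.accept n M.start) atTop (𝓝 0) ↔
    ∃ q ∈ M.accept, Reachable M M.start q ∧ IsRecurrent M q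
  constructor
  · intro hnot
    by_contra hnone
    refine hnot (squeeze_zero (fun n => mu_nonneg _ _) (fun n => mu_mono (fun s hs hrec => ?_) n)
      (tendsto_evalFromProb_not_isRecurrent M M.start))
    exact hnone ⟨_, hs, reachable_evalFrom M _ s, hrec⟩
  · rintro ⟨q, hqF, ⟨s, rfl⟩, hrec⟩ htend
    exact hrec.not_tendsto_evalFromProb hqF (tendsto_evalFromProb_evalFrom htend s)
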